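/- arXiv:2203.16164 — 3 statements merged into one kernel-verified Lean document; each statement's English description precedes it below -/
import Mathlib

section
/- Suppose a third-order tensor 𝒴 ∈ ℂ^{Q×T×P} has a CP decomposition with factor matrices A ∈ ℂ^{Q×U}, B ∈ ℂ^{T×U}, C ∈ ℂ^{P×U}, where C is Vandermonde with pairwise distinct nonzero generators, rank(C̲ ⊙ B) = U, and rank(A) = U. If A', B', C' (with C' Vandermonde with distinct nonzero generators and the same rank conditions) give the same tensor, then there exist a permutation matrix Π and invertible diagonal matrices Λ₁, Λ₂, Λ₃ with Λ₁Λ₂Λ₃ = I such that A' = AΠΛ₁, B' = BΠΛ₂, C' = CΠΛ₃. -/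
open Matrix

/-- Column-wise Khatri-Rao product. -/
def khatriRao {P T U : ℕ} (C : Matrix (Fin P) (Fin U) ℂ) (B : Matrix (Fin T) (Fin U) ℂ) :
    Matrix (Fin P × Fin T) (Fin U) ℂ :=
  fun pt u => C pt.1 u * B pt.2 u

lemma injOfRank {m : Type*} [Fintype m] {n : ℕ} (K : Matrix m (Fin n) ℂ) (h : K.rank = n) :
    Function.Injective K.mulVec := by
  have h2 := LinearMap.finrank_range_add_finrank_ker K.mulVecLin
  rw [Matrix.rank] at h
  rw [h, Module.finrank_fintype_fun_eq_card, Fintype.card_fin] at h2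
  have hk : Module.finrank ℂ (LinearMap.ker K.mulVecLin) = 0 := by omega
  have h1 : LinearMap.ker K.mulVecLin = ⊥ := Submodule.finrank_eq_zero.mp hk
  intro x y hxy
  exact LinearMap.ker_eq_bot.mp h1 hxy

lemma surjOfRank {m : Type*} [Fintype m] {n : ℕ} (A : Matrix m (Fin n) ℂ) (h : A.rank = n) :
    Function.Surjective Aᵀ.mulVec := by
  have ht : Aᵀ.rank = n := by rw [Matrix.rank_transpose]; exact h
  have hr : LinearMap.range Aᵀ.mulVecLin = ⊤ := by
    apply Submodule.eq_top_of_finrank_eq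
    rw [← Matrix.rank, ht, Module.finrank_fintype_fun_eq_card, Fintype.card_fin]
  intro y
  obtain ⟨x, hx⟩ := LinearMap.range_eq_top.mp hr y
  exact ⟨x, hx⟩

/-- key transfer computation -/
lemma keyM {Q T P U : ℕ}
    (A A' : Matrix (Fin Q) (Fin U) ℂ) (B B' : Matrix (Fin T) (Fin U) ℂ)
    (C C' : Matrix (Fin (P + 1)) (Fin U) ℂ)
    (c : Fin U → Fin Q → ℂ)
    (hc : ∀ v u, (∑ q, A q u * c v q) = if u = v then 1 else 0)
    (hsame : ∀ q t p, (∑ u, A q u * B t u * C p u) = ∑ u, A' q u * B' t u * C' p u)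
    (p : Fin (P + 1)) (t : Fin T) (v : Fin U) :
    B t v * C p v = ∑ u, B' t u * C' p u * (∑ q, A' q u * c v q) := by
  calc B t v * C p v
      = ∑ u, (B t u * C p u) * (if u = v then 1 else 0) := by simp
      _ = ∑ u, (B t u * C p u) * (∑ q, A q u * c v q) := by
        refine Finset.sum_congr rfl fun u _ => by rw [hc]
      _ = ∑ u, ∑ q, A q u * B t u * C p u * c v q := by
        refine Finset.sum_congr rfl fun u _ => ?_
        rw [Finset.mul_sum]
        refine Finset.sum_congr rfl fun q _ => by ring
      _ = ∑ q, (∑ u, A q u * B t u * C p u) * c v q := by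
        rw [Finset.sum_comm]
        exact Finset.sum_congr rfl fun q _ => (Finset.sum_mul _ _ _).symm
      _ = ∑ q, (∑ u, A' q u * B' t u * C' p u) * c v q := by
        refine Finset.sum_congr rfl fun q _ => by rw [hsame]
      _ = ∑ u, ∑ q, A' q u * B' t u * C' p u * c v q := by
        rw [Finset.sum_comm]
        exact Finset.sum_congr rfl fun q _ => Finset.sum_mul _ _ _
      _ = ∑ u, B' t u * C' p u * (∑ q, A' q u * c v q) := by
        refine Finset.sum_congr rfl fun u _ => ?_
        rw [Finset.mul_sum]
        refine Finset.sum_congr rfl fun q _ => by ring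

set_option maxHeartbeats 1000000 in
/-- Vandermonde-constrained CPD uniqueness (Sorensen–De Lathauwer): if a third-order
tensor admits two CP decompositions whose third factors are Vandermonde with pairwise
distinct nonzero generators and which satisfy `rank(C̲ ⊙ B) = U` and `rank(A) = U`,
then the two decompositions coincide up to a common column permutation and column
scalings multiplying to one. -/
theorem vandermonde_cpd_uniqueness {Q T P U : ℕ}
    (A A' : Matrix (Fin Q) (Fin U) ℂ) (B B' : Matrix (Fin T) (Fin U) ℂ)
    (z z' : Fin U → ℂ)
    (hz : Function.Injective z) (hznz : ∀ u, z u ≠ 0)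
    (hz' : Function.Injective z') (hznz' : ∀ u, z' u ≠ 0)
    (C C' : Matrix (Fin (P + 1)) (Fin U) ℂ)
    (hC : ∀ p u, C p u = z u ^ ((p : ℕ) + 1))
    (hC' : ∀ p u, C' p u = z' u ^ ((p : ℕ) + 1))
    (Cu Cu' : Matrix (Fin P) (Fin U) ℂ)
    (hCu : ∀ p u, Cu p u = z u ^ ((p : ℕ) + 1))
    (hCu' : ∀ p u, Cu' p u = z' u ^ ((p : ℕ) + 1))
    (hrank1 : (khatriRao Cu B).rank = U) (hrankA : A.rank = U)
    (hrank1' : (khatriRao Cu' B').rank = U) (hrankA' : A'.rank = U)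
    (hsame : ∀ q t p, (∑ u, A q u * B t u * C p u) = ∑ u, A' q u * B' t u * C' p u) :
    ∃ (σ : Equiv.Perm (Fin U)) (d₁ d₂ d₃ : Fin U → ℂ),
      (∀ u, d₁ u * d₂ u * d₃ u = 1) ∧
      (∀ q u, A' q u = d₁ u * A q (σ u)) ∧
      (∀ t u, B' t u = d₂ u * B t (σ u)) ∧
      (∀ p u, C' p u = d₃ u * C p (σ u)) := by
  rcases Nat.eq_zero_or_pos U with rfl | hU
  · exact ⟨1, 1, 1, 1, fun u => u.elim0, fun q u => u.elim0,
      fun t u => u.elim0, fun p u => u.elim0⟩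
  -- P is positive
  have hP : 0 < P := by
    rcases Nat.eq_zero_or_pos P with rfl | h
    · have h1 := Matrix.rank_le_card_height (khatriRao Cu B)
      rw [hrank1] at h1
      simp at h1
      omega
    · exact h
  set p0 : Fin P := ⟨0, hP⟩ with hp0
  set K1 : Matrix (Fin P × Fin T) (Fin U) ℂ := khatriRao Cu B with hK1def
  set K1' : Matrix (Fin P × Fin T) (Fin U) ℂ := khatriRao Cu' B' with hK1'def
  have hK1inj : Function.Injective K1.mulVec := injOfRank _ hrank1
  -- matrix-level cancellation
  have hcan : ∀ (X Y : Matrix (Fin U) (Fin U) ℂ), K1 * X = K1 * Y → X = Y := by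
    intro X Y h
    ext u v
    have hv : K1.mulVec (fun w => X w v) = K1.mulVec (fun w => Y w v) := by
      funext pt
      have := congrFun (congrFun h pt) v
      simpa [Matrix.mul_apply, Matrix.mulVec, dotProduct] using this
    exact congrFun (hK1inj hv) u
  -- left inverses of A and A'
  have hcex : ∀ v : Fin U, ∃ cv : Fin Q → ℂ,
      ∀ u, (∑ q, A q u * cv q) = if u = v then 1 else 0 := by
    intro v
    obtain ⟨cv, hcv⟩ := surjOfRank A hrankA (Pi.single v 1)
    refine ⟨cv, fun u => ?_⟩
    have := congrFun hcv u
    simpa [Matrix.mulVec, dotProduct, Matrix.transpose_apply, Pi.single_apply] using this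
  choose c hc using hcex
  have hcex' : ∀ v : Fin U, ∃ cv : Fin Q → ℂ,
      ∀ u, (∑ q, A' q u * cv q) = if u = v then 1 else 0 := by
    intro v
    obtain ⟨cv, hcv⟩ := surjOfRank A' hrankA' (Pi.single v 1)
    refine ⟨cv, fun u => ?_⟩
    have := congrFun hcv u
    simpa [Matrix.mulVec, dotProduct, Matrix.transpose_apply, Pi.single_apply] using this
  choose c' hc' using hcex'
  set M : Matrix (Fin U) (Fin U) ℂ := fun u v => ∑ q, A' q u * c v q with hMdef
  set M' : Matrix (Fin U) (Fin U) ℂ := fun v u => ∑ q, A q v * c' u q with hM'def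
  have hKM : ∀ (p : Fin (P + 1)) t v,
      B t v * C p v = ∑ u, B' t u * C' p u * M u v :=
    fun p t v => keyM A A' B B' C C' c hc hsame p t v
  have hKM' : ∀ (p : Fin (P + 1)) t u,
      B' t u * C' p u = ∑ v, B t v * C p v * M' v u :=
    fun p t u => keyM A' A B' B C' C c' hc' (fun q t p => (hsame q t p).symm) p t u
  -- S1 : K1 = K1' * M
  have S1 : K1 = K1' * M := by
    ext pt v
    rw [Matrix.mul_apply]
    have h := hKM (pt.1.castSucc) pt.2 v
    rw [hC] at h
    simp only [Fin.coe_castSucc] at h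
    calc K1 pt v = B pt.2 v * z v ^ ((pt.1 : ℕ) + 1) := by
          simp only [hK1def, khatriRao, hCu]; ring
      _ = ∑ u, B' pt.2 u * C' pt.1.castSucc u * M u v := h
      _ = ∑ u, K1' pt u * M u v := by
          refine Finset.sum_congr rfl fun u _ => ?_
          simp only [hK1'def, khatriRao, hCu', hC', Fin.coe_castSucc]; ring
  have S1' : K1' = K1 * M' := by
    ext pt u
    rw [Matrix.mul_apply]
    have h := hKM' (pt.1.castSucc) pt.2 u
    rw [hC'] at h
    simp only [Fin.coe_castSucc] at h
    calc K1' pt u = B' pt.2 u * z' u ^ ((pt.1 : ℕ) + 1) := by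
          simp only [hK1'def, khatriRao, hCu']; ring
      _ = ∑ v, B pt.2 v * C pt.1.castSucc v * M' v u := h
      _ = ∑ v, K1 pt v * M' v u := by
          refine Finset.sum_congr rfl fun v _ => ?_
          simp only [hK1def, khatriRao, hCu, hC, Fin.coe_castSucc]; ring
  -- S2 : K1 * diagonal z = (K1' * diagonal z') * M
  have S2 : K1 * Matrix.diagonal z = (K1' * Matrix.diagonal z') * M := by
    ext pt v
    rw [Matrix.mul_diagonal, Matrix.mul_apply]
    have h := hKM (pt.1.succ) pt.2 v
    rw [hC] at h
    simp only [Fin.val_succ] at h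
    calc K1 pt v * z v = B pt.2 v * z v ^ ((pt.1 : ℕ) + 1 + 1) := by
          simp only [hK1def, khatriRao, hCu]; ring
      _ = ∑ u, B' pt.2 u * C' pt.1.succ u * M u v := h
      _ = ∑ u, (K1' * Matrix.diagonal z') pt u * M u v := by
          refine Finset.sum_congr rfl fun u _ => ?_
          rw [Matrix.mul_diagonal]
          simp only [hK1'def, khatriRao, hCu', hC', Fin.val_succ]; ring
  -- M' * M = 1
  have hM'M : M' * M = 1 := by
    apply hcan
    rw [Matrix.mul_one, ← Matrix.mul_assoc, ← S1', ← S1]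
  have hMM' : M * M' = 1 := mul_eq_one_comm.mp hM'M
  -- shift relation
  have hshiftM : M * Matrix.diagonal z = Matrix.diagonal z' * M := by
    have h1 : Matrix.diagonal z = M' * (Matrix.diagonal z' * M) := by
      apply hcan
      rw [S2, S1', Matrix.mul_assoc, Matrix.mul_assoc]
    calc M * Matrix.diagonal z = M * (M' * (Matrix.diagonal z' * M)) := by rw [← h1]
      _ = (M * M') * (Matrix.diagonal z' * M) := by rw [Matrix.mul_assoc]
      _ = Matrix.diagonal z' * M := by rw [hMM', Matrix.one_mul]
  have hshift : ∀ u v, M u v * z v = z' u * M u v := by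
    intro u v
    have := congrFun (congrFun hshiftM u) v
    simpa [Matrix.mul_diagonal, Matrix.diagonal_mul] using this
  -- each row of M has a nonzero entry
  have hMM'entry : ∀ u u', (∑ v, M u v * M' v u') = if u = u' then 1 else 0 := by
    intro u u'
    have := congrFun (congrFun hMM' u) u'
    simpa [Matrix.mul_apply, Matrix.one_apply] using this
  have hrow : ∀ u, ∃ v, M u v ≠ 0 := by
    intro u
    by_contra h
    push_neg at h
    have h0 := hMM'entry u u
    simp [h] at h0
  set τ : Fin U → Fin U := fun u => (hrow u).choose with hτdef
  have hτ : ∀ u, M u (τ u) ≠ 0 := fun u => (hrow u).choose_spec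
  have hzz' : ∀ u, z' u = z (τ u) := by
    intro u
    have h := hshift u (τ u)
    rw [mul_comm (z' u) (M u (τ u))] at h
    exact (mul_left_cancel₀ (hτ u) h).symm
  have huniq : ∀ u v, M u v ≠ 0 → v = τ u := by
    intro u v hMv
    have h := hshift u v
    rw [mul_comm (z' u) (M u v)] at h
    have hzv : z v = z' u := mul_left_cancel₀ hMv h
    exact hz (by rw [hzv, hzz' u])
  have hτinj : Function.Injective τ := by
    intro a b hab
    apply hz'
    rw [hzz' a, hzz' b, hab]
  set σ : Equiv.Perm (Fin U) := Equiv.ofBijective τ (Finite.injective_iff_bijective.mp hτinj)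
    with hσdef
  have hσap : ∀ u, σ u = τ u := fun u => rfl
  set m : Fin U → ℂ := fun u => M u (τ u) with hmdef
  have hm : ∀ u, m u ≠ 0 := hτ
  have hM'entry : ∀ u u', M' (τ u) u' = if u' = u then (m u)⁻¹ else 0 := by
    intro u u'
    have h := hMM'entry u u'
    have hs : (∑ v, M u v * M' v u') = M u (τ u) * M' (τ u) u' := by
      refine Finset.sum_eq_single (τ u) (fun v _ hv => ?_) (fun h => absurd (Finset.mem_univ _) h)
      have : M u v = 0 := by
        by_contra hc0
        exact hv (huniq u v hc0)
      rw [this, zero_mul]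
    rw [hs] at h
    by_cases he : u' = u
    · subst he
      simp only [if_pos rfl] at h ⊢
      exact (inv_eq_of_mul_eq_one_right h).symm
    · have he' : ¬ u = u' := fun hh => he hh.symm
      rw [if_neg he'] at h
      rw [if_neg he]
      rcases mul_eq_zero.mp h with h0 | h0
      · exact absurd h0 (hm u)
      · exact h0
  -- sum reduction over M'
  have hfM' : ∀ (f : Fin U → ℂ) (u : Fin U), (∑ v, f v * M' v u) = f (τ u) * (m u)⁻¹ := by
    intro f u
    have hre : (∑ v, f v * M' v u) = ∑ w, f (τ w) * M' (τ w) u :=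
      (Equiv.sum_comp σ (fun v => f v * M' v u)).symm
    rw [hre]
    have : ∀ w, f (τ w) * M' (τ w) u = if u = w then f (τ w) * (m w)⁻¹ else 0 := by
      intro w
      rw [hM'entry w u]
      by_cases hw : u = w
      · simp [hw]
      · have : ¬ u = w := hw
        simp [hw]
    rw [Finset.sum_congr rfl (fun w _ => this w)]
    simp
  -- B' formula
  have hB' : ∀ t u, B' t u = (m u)⁻¹ * B t (τ u) := by
    intro t u
    have h := congrFun (congrFun S1' (p0, t)) u
    rw [Matrix.mul_apply] at h
    have hl : K1' (p0, t) u = z' u * B' t u := by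
      simp [hK1'def, khatriRao, hCu', hp0]
    have hr : (∑ v, K1 (p0, t) v * M' v u) = (z (τ u) * B t (τ u)) * (m u)⁻¹ := by
      have := hfM' (fun v => z v * B t v) u
      rw [← this]
      refine Finset.sum_congr rfl fun v _ => ?_
      simp only [hK1def, khatriRao, hCu, hp0]
      norm_num
    rw [hl, hr] at h
    rw [hzz' u] at h
    have hz0 : z (τ u) ≠ 0 := hznz (τ u)
    exact mul_left_cancel₀ hz0 (h.trans (by ring))
  -- A formula
  have hA : ∀ q, (fun v => A q v) = M'.mulVec (fun u => A' q u) := by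
    intro q
    apply hK1inj
    have hmv : K1.mulVec (M'.mulVec fun u => A' q u) = (K1 * M').mulVec (fun u => A' q u) :=
      Matrix.mulVec_mulVec _ _ _
    rw [hmv, ← S1']
    funext pt
    simp only [Matrix.mulVec, dotProduct]
    calc (∑ u, K1 pt u * A q u)
          = ∑ u, A q u * B pt.2 u * z u ^ ((pt.1 : ℕ) + 1) := by
            refine Finset.sum_congr rfl fun u _ => ?_
            simp only [hK1def, khatriRao, hCu]; ring
        _ = ∑ u, A' q u * B' pt.2 u * z' u ^ ((pt.1 : ℕ) + 1) := by
            have h2 := hsame q pt.2 (pt.1.castSucc)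
            calc (∑ u, A q u * B pt.2 u * z u ^ ((pt.1 : ℕ) + 1))
                = ∑ u, A q u * B pt.2 u * C pt.1.castSucc u := by
                  refine Finset.sum_congr rfl fun u _ => by rw [hC]; norm_num
              _ = ∑ u, A' q u * B' pt.2 u * C' pt.1.castSucc u := h2
              _ = _ := by
                  refine Finset.sum_congr rfl fun u _ => by rw [hC']; norm_num
        _ = ∑ u, K1' pt u * A' q u := by
            refine Finset.sum_congr rfl fun u _ => ?_
            simp only [hK1'def, khatriRao, hCu']; ring
  have hA' : ∀ q u, A' q u = m u * A q (τ u) := by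
    intro q u
    have h := congrFun (hA q) (τ u)
    simp only [Matrix.mulVec, dotProduct] at h
    have hs : (∑ u', M' (τ u) u' * A' q u') = (m u)⁻¹ * A' q u := by
      calc (∑ u', M' (τ u) u' * A' q u')
          = ∑ u', (if u' = u then (m u)⁻¹ else 0) * A' q u' := by
            refine Finset.sum_congr rfl fun u' _ => by rw [hM'entry]
        _ = (m u)⁻¹ * A' q u := by simp
    rw [hs] at h
    rw [h, ← mul_assoc, mul_inv_cancel₀ (hm u), one_mul]
  refine ⟨σ, m, fun u => (m u)⁻¹, fun _ => 1, fun u => ?_, fun q u => ?_, fun t u => ?_,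
    fun p u => ?_⟩
  · rw [mul_one, mul_inv_cancel₀ (hm u)]
  · rw [hσap]; exact hA' q u
  · rw [hσap]; exact hB' t u
  · rw [hσap, hC', hC, hzz' u]
    ring
end

section
/- Kruskal's uniqueness theorem: Let 𝒳 be a third-order tensor with CP decomposition in factor matrices A⁽¹⁾ ∈ ℂ^{I×R}, A⁽²⁾ ∈ ℂ^{J×R}, A⁽³⁾ ∈ ℂ^{K×R}. If k_{A⁽¹⁾} + k_{A⁽²⁾} + k_{A⁽³⁾} ≥ 2R + 2, then the rank-R CP decomposition of 𝒳 is unique up to simultaneous column permutation and scaling (with scalings multiplying to one across the three factors). -/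
/-!
Given a subspace `W` of the third mode, contract with a functional `φ` that vanishes on exactly
those columns `c r`, `c' r` that lie in `W`. The two decompositions become two expressions of one
matrix, and Kruskal's rank bound for the first (with `k₁`, `k₂`) against the second shows: if `W`
contains at least `k₃ - 1` of the columns `c' r`, it contains at least as many columns `c r`.
Kruskal's permutation lemma turns this into `c' = c` up to permutation and scaling, and by
symmetry the same holds in the other two modes.

The three permutations then agree and the scalings multiply to one: otherwise some
`M p = b p ⊗ c p - ν p • b (κ p) ⊗ c (ρ p)` is nonzero while `∑ p, a p ⊗ M p = 0`. A functional
`φ ⊗ ξ` chosen to kill all but `k₁` of the `M p`, but not `M p₀`, contradicts the linear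
independence of those `k₁` columns of `a`.
-/

open Matrix

/-- The Kruskal rank of a matrix: the largest `k` (with `k ≤ n`) such that every
subset of `k` columns is linearly independent. -/
noncomputable def kruskalRank {m n : ℕ} (A : Matrix (Fin m) (Fin n) ℂ) : ℕ :=
  sSup {k | k ≤ n ∧ ∀ s : Finset (Fin n), s.card = k →
    LinearIndependent ℂ (fun i : s => fun p => A p (i : Fin n))}

open Finset Submodule Module

section LinearAlgebra

variable {K V : Type*} [Field K] [AddCommGroup V] [Module K V] {ι : Type*}

theorem finrank_span_image_le_card (v : ι → V) (s : Finset ι) :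
    finrank K (span K (v '' s)) ≤ #s := by
  rw [Set.image_eq_range]
  exact (finrank_range_le_card (R := K) _).trans (by simp)

theorem linearIndepOn_iff_finrank_span_image_eq_card {v : ι → V} {s : Finset ι} :
    LinearIndepOn K v ↑s ↔ finrank K (span K (v '' s)) = #s := by
  rw [LinearIndepOn, linearIndependent_iff_card_eq_finrank_span, ← Set.image_eq_range]
  simp [Set.finrank, eq_comm]

theorem LinearIndepOn.finrank_span_image {v : ι → V} {s : Finset ι}
    (hv : LinearIndepOn K v ↑s) : finrank K (span K (v '' s)) = #s :=
  linearIndepOn_iff_finrank_span_image_eq_card.1 hv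

theorem LinearIndepOn.card_le_finrank [FiniteDimensional K V] {v : ι → V} {s : Finset ι}
    {W : Submodule K V} (hv : LinearIndepOn K v ↑s) (hW : ∀ i ∈ s, v i ∈ W) :
    #s ≤ finrank K W := by
  rw [← hv.finrank_span_image]
  exact Submodule.finrank_mono (span_le.2 (by rintro _ ⟨i, hi, rfl⟩; exact hW i hi))

theorem Submodule.exists_dual_apply_eq_zero_iff_mem [Infinite K] [Finite ι] (W : Submodule K V)
    (v : ι → V) : ∃ f : Dual K V, ∀ i, f (v i) = 0 ↔ v i ∈ W := by
  obtain ⟨g, hg⟩ := Module.exists_dual_forall_apply_ne_zero (K := K)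
    (fun i : {i // v i ∉ W} => W.mkQ (v i)) (fun i => by simpa using i.2)
  refine ⟨g ∘ₗ W.mkQ, fun i => ⟨fun h => ?_, fun h => ?_⟩⟩
  · by_contra hi
    exact hg ⟨i, hi⟩ h
  · simp [(Submodule.Quotient.mk_eq_zero W).2 h]

theorem dual_comp_compLeft_apply {β γ : Type*} (φ : Dual K (β → K)) (ξ : Dual K (γ → K))
    (x x' : β → K) (y y' : γ → K) (t : K) :
    (φ ∘ₗ LinearMap.compLeft ξ β) (fun j k => x j * y k - t * (x' j * y' k)) =
      φ x * ξ y - t * (φ x' * ξ y') := by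
  have : LinearMap.compLeft ξ β (fun j k => x j * y k - t * (x' j * y' k)) =
      ξ y • x - (t * ξ y') • x' := by
    ext j
    have : (fun k => x j * y k - t * (x' j * y' k)) = x j • y - (t * x' j) • y' := by
      ext k
      simp [mul_assoc]
    simp only [LinearMap.compLeft_apply, Function.comp_apply, this, map_sub, map_smul,
      smul_eq_mul, Pi.sub_apply, Pi.smul_apply]
    ring
  simp only [LinearMap.comp_apply, this, map_sub, map_smul, smul_eq_mul]
  ring

end LinearAlgebra

section KruskalIndep

variable {K V : Type*} [Field K] [AddCommGroup V] [Module K V] {ι : Type*}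

variable (K) in
/-- `k` is at most the Kruskal rank of the family `v`. -/
def KruskalIndep (k : ℕ) (v : ι → V) : Prop :=
  ∀ s : Finset ι, #s ≤ k → LinearIndepOn K v ↑s

namespace KruskalIndep

variable {k : ℕ} {v : ι → V}

theorem ne_zero (hv : KruskalIndep K k v) (hk : 1 ≤ k) (i : ι) : v i ≠ 0 :=
  (hv {i} (by simpa using hk)).ne_zero (by simp)

theorem notMem_span_of_notMem [DecidableEq ι] (hv : KruskalIndep K k v) {s : Finset ι} {i : ι}
    (hi : i ∉ s) (hs : #s < k) : v i ∉ span K (v '' s) := by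
  have := hv (insert i s) (by rw [card_insert_of_notMem hi]; omega)
  rw [coe_insert, linearIndepOn_insert (by simpa using hi)] at this
  exact this.2

theorem notMem_span_singleton (hv : KruskalIndep K k v) (hk : 2 ≤ k) {i j : ι} (hij : i ≠ j) :
    v i ∉ K ∙ v j := by
  classical
  simpa using hv.notMem_span_of_notMem (s := {j}) (by simpa using hij) (by simp; omega)

theorem card_le_finrank [FiniteDimensional K V] (hv : KruskalIndep K k v) {s : Finset ι}
    (hs : #s ≤ k) {W : Submodule K V} (hW : ∀ i ∈ s, v i ∈ W) : #s ≤ finrank K W :=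
  (hv s hs).card_le_finrank hW

theorem card_filter_mem_le_finrank [Fintype ι] [FiniteDimensional K V] (hv : KruskalIndep K k v)
    (W : Submodule K V) [DecidablePred (v · ∈ W)] (hW : finrank K W < k) :
    #{i | v i ∈ W} ≤ finrank K W := by
  by_contra! hlt
  obtain ⟨t, hts, ht⟩ := exists_subset_card_eq hlt
  have := hv.card_le_finrank (s := t) (by omega) fun i hi => (mem_filter.1 (hts hi)).2
  omega

theorem exists_dual_apply_eq_zero [DecidableEq ι] (hv : KruskalIndep K k v) {s : Finset ι}
    {i : ι} (hi : i ∉ s) (hs : #s + 2 ≤ k) (j : ι) :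
    ∃ f : Dual K V, (∀ q ∈ s, f (v q) = 0) ∧ (j ≠ i → f (v j) = 0) ∧ f (v i) ≠ 0 := by
  have hs' : #((insert j s).erase i) < k := (card_erase_le.trans (card_insert_le j s)).trans_lt
    (by omega)
  obtain ⟨f, hfi, hf⟩ := Submodule.exists_dual_map_eq_bot_of_notMem
    (hv.notMem_span_of_notMem (notMem_erase i _) hs') inferInstance
  have hf' : ∀ q ∈ (insert j s).erase i, f (v q) = 0 := fun q hq =>
    (Submodule.eq_bot_iff _).1 hf _ (mem_map_of_mem (subset_span ⟨q, hq, rfl⟩))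
  refine ⟨f, fun q hq => hf' q (mem_erase.2 ⟨?_, mem_insert_of_mem hq⟩),
    fun hj => hf' j (mem_erase.2 ⟨hj, mem_insert_self j s⟩), hfi⟩
  rintro rfl
  exact hi hq

/-- Contracting with a functional on `V ⧸ W` reduces this to the linear independence of the
`u p` with `x p ∉ W`. -/
theorem mem_of_sum_smul_mem [Fintype ι] {α : Type*} {u : ι → α → K} (hu : KruskalIndep K k u)
    {x : ι → V} {W : Submodule K V} [DecidablePred (x · ∈ W)] (h : ∀ i, ∑ p, u p i • x p ∈ W)
    (hW : #{p | x p ∉ W} ≤ k) (p : ι) : x p ∈ W := by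
  by_cases hp : x p ∈ W
  · exact hp
  rw [← Submodule.Quotient.mk_eq_zero, ← Module.forall_dual_apply_eq_zero_iff K]
  intro f
  have hsum : ∑ q ∈ {q | x q ∉ W}, f (W.mkQ (x q)) • u q = 0 := by
    ext i
    have hi := congrArg f ((Submodule.Quotient.mk_eq_zero W).2 (h i))
    rw [← Submodule.mkQ_apply, map_sum, map_sum, map_zero,
      ← Finset.sum_subset (Finset.subset_univ _)] at hi
    · simpa [mul_comm] using hi
    · intro q _ hq
      simp [(Submodule.Quotient.mk_eq_zero W).2 (by simpa using hq)]
  exact linearIndepOn_finset_iff.1 (hu _ hW) _ hsum p (by simpa using hp)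

theorem span_insert_inf_span_insert [FiniteDimensional K V] [DecidableEq ι]
    (hv : KruskalIndep K k v) {s : Finset ι} {a b : ι} (ha : a ∉ s) (hb : b ∉ s) (hab : a ≠ b)
    (hk : #s + 2 ≤ k) :
    span K (v '' ↑(insert a s)) ⊓ span K (v '' ↑(insert b s)) = span K (v '' s) := by
  have hsup : span K (v '' ↑(insert a s)) ⊔ span K (v '' ↑(insert b s)) =
      span K (v '' ↑(insert a (insert b s))) := by
    rw [← span_union, ← Set.image_union]
    congr 2
    ext
    simp only [coe_insert, Set.mem_union, Set.mem_insert_iff, Finset.mem_coe]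
    tauto
  have hA : #(insert a s) = #s + 1 := card_insert_of_notMem ha
  have hB : #(insert b s) = #s + 1 := card_insert_of_notMem hb
  have hAB : #(insert a (insert b s)) = #s + 2 := by
    rw [card_insert_of_notMem (by simp [hab, ha]), hB]
  have e := Submodule.finrank_sup_add_finrank_inf_eq
    (span K (v '' ↑(insert a s))) (span K (v '' ↑(insert b s)))
  rw [hsup, (hv (insert a (insert b s)) (by omega)).finrank_span_image,
    (hv (insert a s) (by omega)).finrank_span_image,
    (hv (insert b s) (by omega)).finrank_span_image, hA, hB, hAB] at e
  refine (Submodule.eq_of_le_of_finrank_le (le_inf ?_ ?_) ?_).symm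
  · exact span_mono (Set.image_mono (by simp))
  · exact span_mono (Set.image_mono (by simp))
  · rw [(hv s (by omega)).finrank_span_image]
    omega

theorem eq_and_eq_and_eq_one_of_mul_eq {β γ : Type*} {b : ι → β → K} {c : ι → γ → K}
    {k₂ k₃ : ℕ} (hb : KruskalIndep K k₂ b) (hc : KruskalIndep K k₃ c) (h₂ : 2 ≤ k₂)
    (h₃ : 2 ≤ k₃) {p q q' : ι} {t : K} (h : ∀ j k, b p j * c p k = t * (b q j * c q' k)) :
    q = p ∧ q' = p ∧ t = 1 := by
  obtain ⟨j₀, hj₀⟩ : ∃ j, b p j ≠ 0 := Function.ne_iff.1 (hb.ne_zero (by omega) p)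
  obtain ⟨k₀, hk₀⟩ : ∃ k, c p k ≠ 0 := Function.ne_iff.1 (hc.ne_zero (by omega) p)
  have hq' : q' = p := by
    by_contra hne
    refine hc.notMem_span_singleton h₃ (Ne.symm hne)
      (mem_span_singleton.2 ⟨t * b q j₀ / b p j₀, funext fun k => ?_⟩)
    rw [Pi.smul_apply, smul_eq_mul, div_mul_eq_mul_div, div_eq_iff hj₀]
    linear_combination (h j₀ k).symm
  have hq : q = p := by
    by_contra hne
    refine hb.notMem_span_singleton h₂ (Ne.symm hne)
      (mem_span_singleton.2 ⟨t * c q' k₀ / c p k₀, funext fun j => ?_⟩)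
    rw [Pi.smul_apply, smul_eq_mul, div_mul_eq_mul_div, div_eq_iff hk₀]
    linear_combination (h j k₀).symm
  refine ⟨hq, hq', ?_⟩
  rw [hq, hq'] at h
  have : (t - 1) * (b p j₀ * c p k₀) = 0 := by linear_combination (h j₀ k₀).symm
  simpa [sub_eq_zero, hj₀, hk₀] using this

theorem exists_dual_mul_eq_of_mem_and_ne [DecidableEq ι] {β γ : Type*} {b : ι → β → K}
    {c : ι → γ → K} {k₂ k₃ : ℕ} (hb : KruskalIndep K k₂ b) (hc : KruskalIndep K k₃ c)
    {κ ρ : Equiv.Perm ι} {ν : ι → K} {T : Finset ι} {p₀ : ι} (hp₀T : p₀ ∉ T)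
    (hρT : ∀ q ∈ T, ρ q ≠ p₀) (h₂ : #T + 2 ≤ k₂) (h₃ : #T + 2 ≤ k₃)
    (hp₀ : ¬(κ p₀ = p₀ ∧ ρ p₀ = p₀ ∧ ν p₀ = 1)) :
    ∃ (φ : Dual K (β → K)) (ξ : Dual K (γ → K)),
      (∀ q ∈ T, φ (b q) * ξ (c q) = ν q * (φ (b (κ q)) * ξ (c (ρ q)))) ∧
      φ (b p₀) * ξ (c p₀) ≠ ν p₀ * (φ (b (κ p₀)) * ξ (c (ρ p₀))) := by
  obtain ⟨φ, hφT, hφκ, hφ₀⟩ := hb.exists_dual_apply_eq_zero hp₀T h₂ (κ p₀)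
  obtain ⟨ξ, hξT, hξρ, hξ₀⟩ := hc.exists_dual_apply_eq_zero (s := T.image ρ)
    (by simpa using hρT) (by have := card_image_le (s := T) (f := ρ); omega) (ρ p₀)
  refine ⟨φ, ξ, fun q hq => by rw [hφT q hq, hξT (ρ q) (mem_image_of_mem ρ hq)]; ring, ?_⟩
  have hφξ : φ (b p₀) * ξ (c p₀) ≠ 0 := mul_ne_zero hφ₀ hξ₀
  by_cases hfix : κ p₀ = p₀ ∧ ρ p₀ = p₀
  · rw [hfix.1, hfix.2]
    intro heq
    refine hp₀ ⟨hfix.1, hfix.2, ?_⟩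
    have : (1 - ν p₀) * (φ (b p₀) * ξ (c p₀)) = 0 := by linear_combination heq
    exact (sub_eq_zero.1 ((mul_eq_zero.1 this).resolve_right hφξ)).symm
  · rcases not_and_or.1 hfix with hκ | hρ
    · simpa [hφκ hκ] using hφξ
    · simpa [hξρ hρ] using hφξ

end KruskalIndep

end KruskalIndep

section PermutationLemma

open scoped Classical

variable {K V : Type*} [Field K] [AddCommGroup V] [Module K V] [FiniteDimensional K V]
  {ι : Type*} [Fintype ι] {k : ℕ}

theorem KruskalIndep.of_card_filter_mem_le {c c' : ι → V} (hkR : k ≤ Fintype.card ι)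
    (hc : KruskalIndep K k c)
    (h : ∀ W : Submodule K V, k - 1 ≤ #{i | c' i ∈ W} → #{i | c' i ∈ W} ≤ #{i | c i ∈ W}) :
    KruskalIndep K k c' := by
  intro s hs
  obtain ⟨t, hst, -, ht⟩ := exists_subsuperset_card_eq (subset_univ s) hs (by simpa using hkR)
  refine LinearIndepOn.mono ?_ (coe_subset.2 hst)
  by_contra hdep
  set W := span K (c' '' t)
  have hW : finrank K W < k :=
    ht ▸ lt_of_le_of_ne (finrank_span_image_le_card c' t)
      (mt linearIndepOn_iff_finrank_span_image_eq_card.2 hdep)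
  have htW : k ≤ #{i | c' i ∈ W} :=
    ht ▸ card_le_card fun i hi => mem_filter.2 ⟨mem_univ i, subset_span ⟨i, hi, rfl⟩⟩
  have := hc.card_filter_mem_le_finrank W hW
  have := h W (by omega)
  omega

/-- A column of `c` in the spans of `c'` over both `insert a s` and `insert b s` lies in the span
over `s`. So the columns in the span over `insert a s` but not over `s`, for the
`card ι - #s ≥ 2` choices of `a`, are disjoint sets of size `#s + 1 - #G`, where `G` are the
columns in the span over `s`; they fit into the complement of `G` only if `#s ≤ #G`. -/
theorem card_le_card_filter_mem_span_of_insert {c c' : ι → V} (hkR : k ≤ Fintype.card ι)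
    (hc' : KruskalIndep K k c') {s : Finset ι} (hs : #s + 2 ≤ k)
    (ih : ∀ a ∉ s, #s + 1 ≤ #{i | c i ∈ span K (c' '' ↑(insert a s))}) :
    #s ≤ #{i | c i ∈ span K (c' '' s)} := by
  set G : Finset ι := {i | c i ∈ span K (c' '' s)}
  set U : ι → Finset ι := fun a => {i | c i ∈ span K (c' '' ↑(insert a s))}
  have hGU : ∀ a, G ⊆ U a := fun a i hi => by
    simp only [G, U, mem_filter, mem_univ, true_and] at hi ⊢
    exact span_mono (Set.image_mono (by simp)) hi
  have hdisj : ∀ a ∈ sᶜ, ∀ b ∈ sᶜ, a ≠ b → Disjoint (U a \ G) (U b \ G) := by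
    intro a ha b hb hab
    refine disjoint_left.2 fun i hia hib => (mem_sdiff.1 hia).2 ?_
    have hmem : c i ∈ span K (c' '' ↑(insert a s)) ⊓ span K (c' '' ↑(insert b s)) :=
      ⟨(mem_filter.1 (mem_sdiff.1 hia).1).2, (mem_filter.1 (mem_sdiff.1 hib).1).2⟩
    rw [hc'.span_insert_inf_span_insert (mem_compl.1 ha) (mem_compl.1 hb) hab hs] at hmem
    exact mem_filter.2 ⟨mem_univ i, hmem⟩
  have hunion : #(sᶜ.biUnion fun a => U a \ G) ≤ #Gᶜ :=
    card_le_card fun i hi => by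
      obtain ⟨a, -, hia⟩ := mem_biUnion.1 hi
      exact mem_compl.2 (mem_sdiff.1 hia).2
  have hsum := card_nsmul_le_sum sᶜ (fun a => #(U a \ G)) (#s + 1 - #G) fun a ha => by
    rw [card_sdiff_of_subset (hGU a)]
    have : #s + 1 ≤ #(U a) := ih a (mem_compl.1 ha)
    omega
  rw [card_biUnion hdisj, card_compl] at hunion
  rw [card_compl, smul_eq_mul] at hsum
  by_contra! hG
  obtain ⟨x, hx⟩ : ∃ x, Fintype.card ι = #s + 2 + x := ⟨Fintype.card ι - (#s + 2), by omega⟩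
  obtain ⟨y, hy⟩ : ∃ y, #s + 1 = #G + 2 + y := ⟨#s + 1 - (#G + 2), by omega⟩
  rw [show Fintype.card ι - #s = x + 2 by omega, show #s + 1 - #G = y + 2 by omega] at hsum
  rw [show Fintype.card ι - #G = x + y + 3 by omega] at hunion
  nlinarith [hsum.trans hunion]

theorem card_le_card_filter_mem_span {c c' : ι → V} (hkR : k ≤ Fintype.card ι)
    (hc' : KruskalIndep K k c')
    (h : ∀ W : Submodule K V, k - 1 ≤ #{i | c' i ∈ W} → #{i | c' i ∈ W} ≤ #{i | c i ∈ W})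
    (s : Finset ι) (hs : #s ≤ k - 1) : #s ≤ #{i | c i ∈ span K (c' '' s)} := by
  obtain ⟨d, hd⟩ := Nat.exists_eq_add_of_le hs
  induction d generalizing s with
  | zero =>
    have hsW : #s ≤ #{i | c' i ∈ span K (c' '' s)} :=
      card_le_card fun i hi => mem_filter.2 ⟨mem_univ i, subset_span ⟨i, hi, rfl⟩⟩
    exact hsW.trans (h _ (by omega))
  | succ d ih =>
    refine card_le_card_filter_mem_span_of_insert hkR hc' (by omega) fun a ha => ?_
    have := ih (insert a s) (by rw [card_insert_of_notMem ha]; omega)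
      (by rw [card_insert_of_notMem ha]; omega)
    rwa [card_insert_of_notMem ha] at this

/-- Kruskal's permutation lemma. -/
theorem exists_perm_smul_of_card_filter_mem_le {c c' : ι → V} (hk : 2 ≤ k)
    (hkR : k ≤ Fintype.card ι) (hc : KruskalIndep K k c)
    (h : ∀ W : Submodule K V, k - 1 ≤ #{i | c' i ∈ W} → #{i | c' i ∈ W} ≤ #{i | c i ∈ W}) :
    ∃ σ : Equiv.Perm ι, ∃ d : ι → K, ∀ i, c' i = d i • c (σ i) := by
  have hc' := hc.of_card_filter_mem_le hkR h
  have hpar : ∀ j, ∃ i, ∃ t : K, c' j = t • c i := by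
    intro j
    obtain ⟨i, hi⟩ : ({i | c i ∈ span K (c' '' ↑({j} : Finset ι))} : Finset ι).Nonempty :=
      card_pos.1 (lt_of_lt_of_le (by simp)
        (card_le_card_filter_mem_span hkR hc' h {j} (by simp; omega)))
    simp only [coe_singleton, Set.image_singleton, mem_filter, mem_univ, true_and,
      mem_span_singleton] at hi
    obtain ⟨t, ht⟩ := hi
    have ht0 : t ≠ 0 := by
      rintro rfl
      exact hc.ne_zero (by omega) i (by simp [← ht])
    exact ⟨i, t⁻¹, by rw [← ht, smul_smul, inv_mul_cancel₀ ht0, one_smul]⟩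
  choose f d hd using hpar
  have hf : Function.Injective f := by
    intro j j' hjj
    by_contra hne
    have hd0 : d j' ≠ 0 := by
      rintro h0
      exact hc'.ne_zero (by omega) j' (by simp [hd j', h0])
    refine hc'.notMem_span_singleton hk hne (mem_span_singleton.2 ⟨d j / d j', ?_⟩)
    rw [hd j, hd j', hjj, smul_smul, div_mul_cancel₀ _ hd0]
  exact ⟨Equiv.ofBijective f (Finite.injective_iff_bijective.1 hf), d, hd⟩

end PermutationLemma

section CPDecomposition

open scoped Classical

variable {K : Type*} [Field K] {ι : Type*} [Fintype ι] {α β γ : Type*}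

def cpTensor (a : ι → α → K) (b : ι → β → K) (c : ι → γ → K) (i : α) (j : β) (k : γ) : K :=
  ∑ r, a r i * b r j * c r k

theorem cpTensor_rotate (a : ι → α → K) (b : ι → β → K) (c : ι → γ → K) (i : α) (j : β)
    (k : γ) : cpTensor b c a j k i = cpTensor a b c i j k :=
  sum_congr rfl fun r _ => by ring

theorem cpTensor_rotate_eq {a a' : ι → α → K} {b b' : ι → β → K} {c c' : ι → γ → K}
    (h : cpTensor a b c = cpTensor a' b' c') : cpTensor b c a = cpTensor b' c' a' := by
  funext j k i
  rw [cpTensor_rotate a b c, cpTensor_rotate a' b' c', h]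

theorem dual_apply_cpTensor (a : ι → α → K) (b : ι → β → K) (c : ι → γ → K)
    (φ : Dual K (γ → K)) (i : α) (j : β) :
    φ (cpTensor a b c i j) = ∑ r, φ (c r) * (a r i * b r j) := by
  have : cpTensor a b c i j = ∑ r, (a r i * b r j) • c r := by
    ext k
    simp [cpTensor, Finset.sum_apply]
  simp [this, mul_comm]

theorem cpTensor_smul_comp_perm (a : ι → α → K) (b : ι → β → K) (c : ι → γ → K)
    (σ₁ σ₂ σ₃ : Equiv.Perm ι) (d₁ d₂ d₃ : ι → K) :
    cpTensor (fun r => d₁ r • a (σ₁ r)) (fun r => d₂ r • b (σ₂ r)) (fun r => d₃ r • c (σ₃ r)) =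
      cpTensor (fun p => (d₁ * d₂ * d₃) (σ₁.symm p) • a p) (b ∘ (σ₁.symm.trans σ₂))
        (c ∘ (σ₁.symm.trans σ₃)) := by
  funext i j k
  refine Fintype.sum_equiv σ₁ _ _ fun r => ?_
  simp only [Pi.smul_apply, smul_eq_mul, Function.comp_apply, Equiv.trans_apply,
    Equiv.symm_apply_apply, Pi.mul_apply]
  ring

/-- Kruskal's rank bound for the matrix `∑ r, μ r • u r ⊗ w r`, whose rank is at most the number
of nonzero terms on the right. -/
theorem min_add_min_le_card_add_card [Finite β] {ι' : Type*} [Fintype ι'] {u : ι → α → K}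
    {w : ι → β → K} {u' : ι' → α → K} {w' : ι' → β → K} {μ : ι → K} {μ' : ι' → K} {p q : ℕ}
    (hu : KruskalIndep K p u) (hw : KruskalIndep K q w)
    (h : ∀ i j, ∑ r, μ r * (u r i * w r j) = ∑ r, μ' r * (u' r i * w' r j)) :
    min p #{r | μ r ≠ 0} + min q #{r | μ r ≠ 0} ≤ #{r | μ r ≠ 0} + #{r | μ' r ≠ 0} := by
  set S : Finset ι := {r | μ r ≠ 0}
  set S' : Finset ι' := {r | μ' r ≠ 0}
  set x : ι → β → K := fun r => μ r • w r
  set x' : ι' → β → K := fun r => μ' r • w' r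
  obtain ⟨T, hTS, hT⟩ := exists_subset_card_eq (Nat.sub_le #S p)
  set Z := span K (x '' T ∪ x' '' S')
  have hsum : ∀ i, ∑ r, u r i • x r ∈ Z := fun i => by
    have : ∑ r, u r i • x r = ∑ r, u' r i • x' r := by
      ext j
      simpa [x, x', Finset.sum_apply, mul_left_comm] using h i j
    rw [this]
    refine sum_mem fun r _ => smul_mem _ _ ?_
    by_cases hr : r ∈ S'
    · exact subset_span (Or.inr ⟨r, hr, rfl⟩)
    · simp_all [S', x']
  have hout : #{r | x r ∉ Z} ≤ p := by
    have hST : #(S \ T) ≤ p := by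
      rw [card_sdiff_of_subset hTS]
      omega
    refine (card_le_card fun r hr => ?_).trans hST
    have hr : x r ∉ Z := (mem_filter.1 hr).2
    refine mem_sdiff.2 ⟨mem_filter.2 ⟨mem_univ r, fun h0 => hr ?_⟩,
      fun hrT => hr (subset_span (Or.inl ⟨r, hrT, rfl⟩))⟩
    simp [x, h0]
  have hwZ : ∀ r ∈ S, w r ∈ Z := fun r hr => by
    have : w r = (μ r)⁻¹ • x r := by simp [x, smul_smul, inv_mul_cancel₀ (mem_filter.1 hr).2]
    exact this ▸ smul_mem _ _ (hu.mem_of_sum_smul_mem hsum hout r)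
  obtain ⟨S₀, hS₀S, hS₀⟩ := exists_subset_card_eq (min_le_right q #S)
  have h₁ := hw.card_le_finrank (s := S₀) (by omega) fun r hr => hwZ r (hS₀S hr)
  have h₂ : finrank K Z ≤ #T + #S' := by
    change finrank K (span K (x '' T ∪ x' '' S')) ≤ _
    rw [span_union]
    exact (Submodule.finrank_add_le_finrank_add_finrank _ _).trans
      (add_le_add (finrank_span_image_le_card x T) (finrank_span_image_le_card x' S'))
  omega

theorem card_filter_mem_le_of_cpTensor_eq [Infinite K] [Finite β] {a a' : ι → α → K}
    {b b' : ι → β → K} {c c' : ι → γ → K} {k₁ k₂ k₃ : ℕ} (h : cpTensor a b c = cpTensor a' b' c')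
    (ha : KruskalIndep K k₁ a) (hb : KruskalIndep K k₂ b) (h₁ : k₁ ≤ Fintype.card ι)
    (h₂ : k₂ ≤ Fintype.card ι) (hk : 2 * Fintype.card ι + 2 ≤ k₁ + k₂ + k₃)
    (W : Submodule K (γ → K)) (hW : k₃ - 1 ≤ #{r | c' r ∈ W}) :
    #{r | c' r ∈ W} ≤ #{r | c r ∈ W} := by
  obtain ⟨φ, hφ⟩ := W.exists_dual_apply_eq_zero_iff_mem (Sum.elim c c')
  have key := min_add_min_le_card_add_card ha hb (μ := fun r => φ (c r))
    (μ' := fun r => φ (c' r)) fun i j => by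
      rw [← dual_apply_cpTensor, ← dual_apply_cpTensor, h]
  have hS : #{r | φ (c r) ≠ 0} = Fintype.card ι - #{r | c r ∈ W} := by
    rw [← card_compl, compl_filter]
    congr 1
    ext r
    simpa using (hφ (Sum.inl r)).not
  have hS' : #{r | φ (c' r) ≠ 0} = Fintype.card ι - #{r | c' r ∈ W} := by
    rw [← card_compl, compl_filter]
    congr 1
    ext r
    simpa using (hφ (Sum.inr r)).not
  rw [hS, hS'] at key
  have := card_le_univ ({r | c r ∈ W} : Finset ι)
  have := card_le_univ ({r | c' r ∈ W} : Finset ι)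
  omega

theorem exists_perm_smul_of_cpTensor_eq [Infinite K] [Finite β] [Finite γ] {a a' : ι → α → K}
    {b b' : ι → β → K} {c c' : ι → γ → K} {k₁ k₂ k₃ : ℕ} (h : cpTensor a b c = cpTensor a' b' c')
    (ha : KruskalIndep K k₁ a) (hb : KruskalIndep K k₂ b) (hc : KruskalIndep K k₃ c)
    (h₁ : k₁ ≤ Fintype.card ι) (h₂ : k₂ ≤ Fintype.card ι) (h₃ : k₃ ≤ Fintype.card ι)
    (hk : 2 * Fintype.card ι + 2 ≤ k₁ + k₂ + k₃) :
    ∃ σ : Equiv.Perm ι, ∃ d : ι → K, ∀ r, c' r = d r • c (σ r) :=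
  exists_perm_smul_of_card_filter_mem_le (by omega) h₃ hc
    (card_filter_mem_le_of_cpTensor_eq h ha hb h₁ h₂ hk)

theorem sum_smul_sub_eq_zero_of_cpTensor_eq {a : ι → α → K} {b : ι → β → K} {c : ι → γ → K}
    {κ ρ : Equiv.Perm ι} {ν : ι → K}
    (h : cpTensor a b c = cpTensor (fun r => ν r • a r) (b ∘ κ) (c ∘ ρ)) (i : α) :
    ∑ p, a p i • (fun j k => b p j * c p k - ν p * (b (κ p) j * c (ρ p) k)) = 0 := by
  ext j k
  have := congrFun (congrFun (congrFun h i) j) k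
  simp only [cpTensor, Function.comp_apply, Pi.smul_apply, smul_eq_mul] at this
  simp only [Finset.sum_apply, Pi.smul_apply, smul_eq_mul, Pi.zero_apply, mul_sub,
    sum_sub_distrib]
  rw [sub_eq_zero]
  convert this using 2 <;> ring

theorem mul_eq_of_cpTensor_eq_perm {a : ι → α → K} {b : ι → β → K} {c : ι → γ → K}
    {k₁ k₂ k₃ : ℕ} (ha : KruskalIndep K k₁ a) (hb : KruskalIndep K k₂ b)
    (hc : KruskalIndep K k₃ c) (h₁ : k₁ ≤ Fintype.card ι) (h₂ : k₂ ≤ Fintype.card ι)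
    (h₃ : k₃ ≤ Fintype.card ι) (hk : 2 * Fintype.card ι + 2 ≤ k₁ + k₂ + k₃)
    {κ ρ : Equiv.Perm ι} {ν : ι → K}
    (h : cpTensor a b c = cpTensor (fun r => ν r • a r) (b ∘ κ) (c ∘ ρ)) (p : ι) (j : β) (k : γ) :
    b p j * c p k = ν p * (b (κ p) j * c (ρ p) k) := by
  set M : ι → β → γ → K := fun p j k => b p j * c p k - ν p * (b (κ p) j * c (ρ p) k)
  suffices hM0 : ∀ p, M p = 0 from sub_eq_zero.1 (congrFun (congrFun (hM0 p) j) k)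
  by_contra! ⟨p₀, hp₀⟩
  set S : Finset ι := {p | M p ≠ 0}
  obtain ⟨T, hTsub, hTcard⟩ := exists_subset_card_eq (s := S \ {p₀, ρ.symm p₀}) (n := #S - k₁) (by
    have := le_card_sdiff {p₀, ρ.symm p₀} S
    have := card_le_two (a := p₀) (b := ρ.symm p₀)
    omega)
  have hTS : T ⊆ S := fun q hq => (mem_sdiff.1 (hTsub hq)).1
  have hSR : #S ≤ Fintype.card ι := card_le_univ S
  obtain ⟨φ, ξ, hφξT, hφξp₀⟩ := hb.exists_dual_mul_eq_of_mem_and_ne (κ := κ) (ρ := ρ) (ν := ν)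
    (T := T) (p₀ := p₀) hc
    (fun hq => (mem_sdiff.1 (hTsub hq)).2 (by simp))
    (fun q hq hρq => (mem_sdiff.1 (hTsub hq)).2 (by simp [← hρq])) (by omega) (by omega)
    (fun ⟨hκ, hρ, hν⟩ => hp₀ (by ext j k; simp [M, hκ, hρ, hν]))
  set Ξ : Dual K (β → γ → K) := φ ∘ₗ LinearMap.compLeft ξ β
  have hΞ : ∀ p, Ξ (M p) = 0 ↔ φ (b p) * ξ (c p) = ν p * (φ (b (κ p)) * ξ (c (ρ p))) :=
    fun p => by rw [dual_comp_compLeft_apply, sub_eq_zero]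
  have hout : #{p | M p ∉ LinearMap.ker Ξ} ≤ k₁ := by
    refine (card_le_card fun p hp => mem_sdiff.2 ⟨mem_filter.2 ⟨mem_univ p, ?_⟩, ?_⟩).trans
      (by rw [card_sdiff_of_subset hTS]; omega)
    · rintro h0
      simp [h0] at hp
    · exact fun hpT => (mem_filter.1 hp).2 ((hΞ p).2 (hφξT p hpT))
  exact hφξp₀ ((hΞ p₀).1 (ha.mem_of_sum_smul_mem
    (fun i => (sum_smul_sub_eq_zero_of_cpTensor_eq h i).symm ▸ zero_mem _) hout p₀))

theorem exists_perm_scaling_of_cpTensor_eq [Infinite K] [Finite α] [Finite β] [Finite γ]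
    {a a' : ι → α → K} {b b' : ι → β → K} {c c' : ι → γ → K} {k₁ k₂ k₃ : ℕ}
    (h : cpTensor a b c = cpTensor a' b' c') (ha : KruskalIndep K k₁ a)
    (hb : KruskalIndep K k₂ b) (hc : KruskalIndep K k₃ c) (h₁ : k₁ ≤ Fintype.card ι)
    (h₂ : k₂ ≤ Fintype.card ι) (h₃ : k₃ ≤ Fintype.card ι)
    (hk : 2 * Fintype.card ι + 2 ≤ k₁ + k₂ + k₃) :
    ∃ (σ : Equiv.Perm ι) (d₁ d₂ d₃ : ι → K), (∀ r, d₁ r * d₂ r * d₃ r = 1) ∧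
      (∀ r, a' r = d₁ r • a (σ r)) ∧ (∀ r, b' r = d₂ r • b (σ r)) ∧
      (∀ r, c' r = d₃ r • c (σ r)) := by
  obtain ⟨σ₁, d₁, hd₁⟩ := exists_perm_smul_of_cpTensor_eq (cpTensor_rotate_eq h) hb hc ha h₂ h₃ h₁
    (by omega)
  obtain ⟨σ₂, d₂, hd₂⟩ := exists_perm_smul_of_cpTensor_eq
    (cpTensor_rotate_eq (cpTensor_rotate_eq h)) hc ha hb h₃ h₁ h₂ (by omega)
  obtain ⟨σ₃, d₃, hd₃⟩ := exists_perm_smul_of_cpTensor_eq h ha hb hc h₁ h₂ h₃ hk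
  have key := mul_eq_of_cpTensor_eq_perm ha hb hc h₁ h₂ h₃ hk <| h.trans <| by
    rw [funext hd₁, funext hd₂, funext hd₃, cpTensor_smul_comp_perm]
  have hid := fun r => hb.eq_and_eq_and_eq_one_of_mul_eq hc (by omega) (by omega) (key (σ₁ r))
  refine ⟨σ₁, d₁, d₂, d₃, fun r => ?_, hd₁, fun r => ?_, fun r => ?_⟩
  · simpa using (hid r).2.2
  · rw [hd₂ r, show σ₂ r = σ₁ r by simpa using (hid r).1]
  · rw [hd₃ r, show σ₃ r = σ₁ r by simpa using (hid r).2.1]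

end CPDecomposition

theorem kruskalRank_le_and_linearIndependent {m n : ℕ} (A : Matrix (Fin m) (Fin n) ℂ) :
    kruskalRank A ≤ n ∧ ∀ s : Finset (Fin n), #s = kruskalRank A →
      LinearIndependent ℂ (fun i : s => fun p => A p (i : Fin n)) := by
  refine Nat.sSup_mem (s := {k | k ≤ n ∧ _}) ⟨0, Nat.zero_le n, fun s hs => ?_⟩
    ⟨n, fun _ hk => hk.1⟩
  rw [card_eq_zero.1 hs]
  exact linearIndependent_empty_type

theorem kruskalIndep_kruskalRank {m n : ℕ} (A : Matrix (Fin m) (Fin n) ℂ) :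
    KruskalIndep ℂ (kruskalRank A) Aᵀ := by
  intro s hs
  obtain ⟨hle, hindep⟩ := kruskalRank_le_and_linearIndependent A
  obtain ⟨t, hst, -, ht⟩ := exists_subsuperset_card_eq (subset_univ s) hs (by simpa using hle)
  exact LinearIndepOn.mono (hindep t ht) (coe_subset.2 hst)

/-- Kruskal's uniqueness theorem: if `k_{A¹} + k_{A²} + k_{A³} ≥ 2R + 2`, then the
rank-`R` CP decomposition is unique up to a common column permutation and column
scalings multiplying to one. -/
theorem kruskal_uniqueness {I J K R : ℕ}
    (A₁ : Matrix (Fin I) (Fin R) ℂ) (A₂ : Matrix (Fin J) (Fin R) ℂ)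
    (A₃ : Matrix (Fin K) (Fin R) ℂ)
    (hk : kruskalRank A₁ + kruskalRank A₂ + kruskalRank A₃ ≥ 2 * R + 2) :
    ∀ (B₁ : Matrix (Fin I) (Fin R) ℂ) (B₂ : Matrix (Fin J) (Fin R) ℂ)
      (B₃ : Matrix (Fin K) (Fin R) ℂ),
      (∀ i j k, (∑ r, A₁ i r * A₂ j r * A₃ k r) = ∑ r, B₁ i r * B₂ j r * B₃ k r) →
      ∃ (σ : Equiv.Perm (Fin R)) (d₁ d₂ d₃ : Fin R → ℂ),
        (∀ r, d₁ r * d₂ r * d₃ r = 1) ∧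
        (∀ i r, B₁ i r = d₁ r * A₁ i (σ r)) ∧
        (∀ j r, B₂ j r = d₂ r * A₂ j (σ r)) ∧
        (∀ k r, B₃ k r = d₃ r * A₃ k (σ r)) := by
  intro B₁ B₂ B₃ h
  obtain ⟨σ, d₁, d₂, d₃, hd, h₁, h₂, h₃⟩ := exists_perm_scaling_of_cpTensor_eq
    (a := A₁ᵀ) (b := A₂ᵀ) (c := A₃ᵀ) (a' := B₁ᵀ) (b' := B₂ᵀ) (c' := B₃ᵀ)
    (funext fun i => funext fun j => funext fun k => h i j k)
    (kruskalIndep_kruskalRank A₁) (kruskalIndep_kruskalRank A₂) (kruskalIndep_kruskalRank A₃)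
    (by simpa using (kruskalRank_le_and_linearIndependent A₁).1)
    (by simpa using (kruskalRank_le_and_linearIndependent A₂).1)
    (by simpa using (kruskalRank_le_and_linearIndependent A₃).1) (by simpa using hk)
  exact ⟨σ, d₁, d₂, d₃, hd, fun i r => by simpa using congrFun (h₁ r) i,
    fun j r => by simpa using congrFun (h₂ r) j, fun k r => by simpa using congrFun (h₃ r) k⟩
end

section
/- Let A_IRS ∈ ℂ^{M×U} have full Kruskal rank min(M,U), and let V ∈ ℂ^{M×Q} have i.i.d. entries drawn uniformly from the complex unit circle. Then with probability 1, rank(VᵀA_IRS) = min(Q, U) provided M ≥ min(Q,U); in particular if Q ≥ U and the columns of A_IRS are linearly independent, VᵀA_IRS has full column rank U almost surely. -/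
open Matrix MeasureTheory

/-- The uniform probability measure on `[0, 2π]` (for the random phases). -/
noncomputable def phaseMeasure : Measure ℝ :=
  ((2 * Real.pi).toNNReal)⁻¹ • volume.restrict (Set.Icc 0 (2 * Real.pi))

instance : SigmaFinite phaseMeasure := by
  unfold phaseMeasure; infer_instance

/-! The `r × r` leading minor of `Vᵀ A`, `r = min Q U`, is a polynomial in the entries of `V`.
It is not the zero polynomial: by the Kruskal rank hypothesis the first `r` columns `B` of `A` are
independent, and substituting `conj B` for the first `r` columns of `V` gives the Gram
determinant `det (Bᴴ B) ≠ 0`. A nonzero polynomial evaluated at independent variables, none of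
whose laws has an atom, is almost surely nonzero (Fubini and induction on the number of
variables; in one variable there are finitely many roots). Hence the minor is almost surely
invertible and `Vᵀ A` has rank `r`. -/

section PolynomialAE

variable {α : Type*} [MeasurableSpace α] {μ : Measure α} {f : α → ℂ}

theorem ae_polynomial_eval_ne_zero (hf₀ : ∀ z, μ (f ⁻¹' {z}) = 0) {p : Polynomial ℂ}
    (hp : p ≠ 0) : ∀ᵐ t ∂μ, p.eval (f t) ≠ 0 := by
  have hroots : μ (⋃ z ∈ p.roots.toFinset, f ⁻¹' {z}) = 0 :=
    (measure_biUnion_null_iff p.roots.toFinset.countable_toSet).2 fun z _ => hf₀ z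
  refine measure_mono_null (fun t ht => ?_) hroots
  simpa [Polynomial.mem_roots hp] using ht

theorem measurable_mvPolynomial_eval_comp {σ : Type*} [Countable σ] (hf : Measurable f)
    (P : MvPolynomial σ ℂ) : Measurable fun γ : σ → α => MvPolynomial.eval (f ∘ γ) P :=
  (MvPolynomial.continuous_eval P).measurable.comp
    (measurable_pi_lambda _ fun i => hf.comp (measurable_pi_apply i))

theorem measurable_fin_cons {n : ℕ} :
    Measurable fun x : α × (Fin n → α) => (Fin.cons x.1 x.2 : Fin (n + 1) → α) := by
  convert (MeasurableEquiv.piFinSuccAbove (fun _ => α) 0).symm.measurable with x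
  simp [MeasurableEquiv.piFinSuccAbove, Fin.consEquiv]

variable [SigmaFinite μ]

theorem ae_mvPolynomial_eval_ne_zero_fin (hf : Measurable f)
    (hf₀ : ∀ z, μ (f ⁻¹' {z}) = 0) :
    ∀ {n : ℕ} {P : MvPolynomial (Fin n) ℂ}, P ≠ 0 →
      ∀ᵐ γ ∂(Measure.pi fun _ : Fin n => μ), MvPolynomial.eval (f ∘ γ) P ≠ 0
  | 0, P, hP => .of_forall fun γ => by
    rw [MvPolynomial.eq_C_of_isEmpty P] at hP ⊢
    simpa using hP
  | n + 1, P, hP => by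
    obtain ⟨k, hk⟩ := Polynomial.support_nonempty.2
      ((EmbeddingLike.map_ne_zero_iff (f := MvPolynomial.finSuccEquiv ℂ n)).2 hP)
    have hsection : ∀ᵐ γ ∂(Measure.pi fun _ : Fin n => μ), ∀ᵐ t ∂μ,
        MvPolynomial.eval (f ∘ Fin.cons t γ) P ≠ 0 := by
      filter_upwards [ae_mvPolynomial_eval_ne_zero_fin hf hf₀ (Polynomial.mem_support_iff.1 hk)]
        with γ hγ
      have hne : (MvPolynomial.finSuccEquiv ℂ n P).map (MvPolynomial.eval (f ∘ γ)) ≠ 0 :=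
        fun h => hγ (by simpa using congrArg (Polynomial.coeff · k) h)
      filter_upwards [ae_polynomial_eval_ne_zero hf₀ hne] with t ht
      rwa [Fin.comp_cons, MvPolynomial.eval_eq_eval_mv_eval']
    have hmeas : MeasurableSet
        {x : α × (Fin n → α) | MvPolynomial.eval (f ∘ Fin.cons x.1 x.2) P ≠ 0} :=
      ((measurable_mvPolynomial_eval_comp hf P).comp measurable_fin_cons)
        (measurableSet_singleton 0).compl
    have hprod := (Measure.ae_prod_iff_ae_ae hmeas).2 ((Measure.ae_ae_comm hmeas).2 hsection)
    filter_upwards [(measurePreserving_piFinSuccAbove (fun _ => μ) 0).quasiMeasurePreserving.ae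
      hprod] with γ hγ
    simpa [MeasurableEquiv.piFinSuccAbove] using hγ

theorem ae_mvPolynomial_eval_ne_zero {σ : Type*} [Fintype σ] (hf : Measurable f)
    (hf₀ : ∀ z, μ (f ⁻¹' {z}) = 0) {P : MvPolynomial σ ℂ} (hP : P ≠ 0) :
    ∀ᵐ γ ∂(Measure.pi fun _ : σ => μ), MvPolynomial.eval (f ∘ γ) P ≠ 0 := by
  set e := Fintype.equivFin σ
  have hP' : MvPolynomial.rename e P ≠ 0 :=
    (MvPolynomial.rename_injective _ e.injective).ne_iff' (map_zero _) |>.2 hP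
  have he := (measurePreserving_piCongrLeft (fun _ => μ) e.symm).symm.quasiMeasurePreserving
  filter_upwards [he.ae (ae_mvPolynomial_eval_ne_zero_fin hf hf₀ hP')] with γ hγ
  convert hγ using 2
  rw [MvPolynomial.eval_rename]
  congr
  funext s
  simp [MeasurableEquiv.piCongrLeft, Equiv.piCongrLeft_symm_apply]

end PolynomialAE

theorem kruskalRank_mem {m n : ℕ} (A : Matrix (Fin m) (Fin n) ℂ) :
    kruskalRank A ∈ {k | k ≤ n ∧ ∀ s : Finset (Fin n), s.card = k →
      LinearIndependent ℂ (fun i : s => fun p => A p (i : Fin n))} :=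
  Nat.sSup_mem ⟨0, Nat.zero_le n, fun s hs => by
    rw [Finset.card_eq_zero.1 hs]; exact linearIndependent_empty_type⟩ ⟨n, fun _ h => h.1⟩

theorem linearIndependent_col_submatrix_of_le_kruskalRank {m n k : ℕ}
    (A : Matrix (Fin m) (Fin n) ℂ) {c : Fin k → Fin n} (hc : Function.Injective c)
    (hk : k ≤ kruskalRank A) : LinearIndependent ℂ (A.submatrix id c).col := by
  obtain ⟨hle, hind⟩ := kruskalRank_mem A
  obtain ⟨t, hct, -, ht⟩ := Finset.exists_subsuperset_card_eq (n := kruskalRank A)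
    (Finset.subset_univ (Finset.univ.image c))
    (by rwa [Finset.card_image_of_injective _ hc, Finset.card_univ, Fintype.card_fin])
    (by rwa [Finset.card_univ, Fintype.card_fin])
  exact (hind t ht).comp (fun j => ⟨c j, hct (Finset.mem_image_of_mem c (Finset.mem_univ j))⟩)
    fun i j h => hc (congrArg Subtype.val h)

section TransposeMulMinor

variable {m q n R : Type*} [Fintype m] [Fintype n] [DecidableEq n] [CommRing R]

-- Without the explicit `σ`, `*` is elaborated through the `CStarMatrix` default instance.
noncomputable def transposeMulMinor (B : Matrix m n R) (e : n → q) : MvPolynomial (m × q) R :=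
  (((mvPolynomialX m q R)ᵀ * B.map (MvPolynomial.C (σ := m × q))).submatrix e id).det

theorem eval_transposeMulMinor (B : Matrix m n R) (e : n → q) (z : m × q → R) :
    MvPolynomial.eval z (transposeMulMinor B e) =
      (((of fun i j => z (i, j))ᵀ * B).submatrix e id).det := by
  rw [transposeMulMinor, RingHom.map_det]
  congr 1
  ext k l
  simp [Matrix.mul_apply]

open scoped ComplexOrder in
theorem transposeMulMinor_ne_zero {B : Matrix m n ℂ} (hB : LinearIndependent ℂ B.col)
    {e : n → q} (he : Function.Injective e) : transposeMulMinor B e ≠ 0 := by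
  intro h
  -- At `X = conj B` on the rows `e` (and `0` elsewhere) the minor is `det (Bᴴ * B)`.
  set z : m × q → ℂ := fun p => Function.extend e (fun k => star (B p.1 k)) 0 p.2
  have hgram : ((of fun i j => z (i, j))ᵀ * B).submatrix e id = Bᴴ * B := by
    ext k l
    simp [z, Matrix.mul_apply, he.extend_apply]
  have hdet := congrArg (MvPolynomial.eval z) h
  rw [eval_transposeMulMinor, hgram, map_zero] at hdet
  exact ((isUnit_iff_isUnit_det _).1
    (PosDef.conjTranspose_mul_self B (mulVec_injective_iff.2 hB)).isUnit).ne_zero hdet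

theorem ae_det_submatrix_transpose_mul_ne_zero [Fintype q] {α : Type*} [MeasurableSpace α]
    {μ : Measure α} [SigmaFinite μ] {f : α → ℂ} (hf : Measurable f)
    (hf₀ : ∀ z, μ (f ⁻¹' {z}) = 0) {B : Matrix m n ℂ} (hB : LinearIndependent ℂ B.col)
    {e : n → q} (he : Function.Injective e) :
    ∀ᵐ γ ∂(Measure.pi fun _ : m × q => μ),
      (((of fun i j => f (γ (i, j)))ᵀ * B).submatrix e id).det ≠ 0 := by
  filter_upwards [ae_mvPolynomial_eval_ne_zero hf hf₀ (transposeMulMinor_ne_zero hB he)]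
    with γ hγ
  rwa [eval_transposeMulMinor] at hγ

end TransposeMulMinor

theorem phaseMeasure_preimage_singleton (z : ℂ) :
    phaseMeasure ((fun t : ℝ => Complex.exp (Complex.I * t)) ⁻¹' {z}) = 0 :=
  (Measure.absolutelyContinuous_of_le Measure.restrict_le_self).smul_left _ <|
    Set.Countable.measure_zero ((Set.countable_singleton z).preimage_cexp.preimage
      fun _ _ h => Complex.ofReal_injective (mul_left_cancel₀ Complex.I_ne_zero h)) _

/-- With `V` having i.i.d. entries uniform on the complex unit circle and `A_IRS` of
full Kruskal rank `min M U` with `M ≥ min Q U`, the matrix `Vᵀ A_IRS` has rank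
`min Q U` almost surely. -/
theorem rank_Vt_mul_steering_ae {M Q U : ℕ}
    (A : Matrix (Fin M) (Fin U) ℂ)
    (hk : kruskalRank A = min M U) (hM : M ≥ min Q U) :
    ∀ᵐ γ ∂(Measure.pi fun _ : Fin M × Fin Q => phaseMeasure),
      ((Matrix.of fun i q => Complex.exp (Complex.I * (γ (i, q) : ℂ)) :
          Matrix (Fin M) (Fin Q) ℂ)ᵀ * A).rank = min Q U := by
  have hrU : min Q U ≤ U := min_le_right Q U
  have hrQ : min Q U ≤ Q := min_le_left Q U
  have hA : LinearIndependent ℂ (A.submatrix id (Fin.castLE hrU)).col :=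
    linearIndependent_col_submatrix_of_le_kruskalRank A (Fin.castLE_injective hrU)
      (hk ▸ le_min hM hrU)
  filter_upwards [ae_det_submatrix_transpose_mul_ne_zero (by fun_prop)
    phaseMeasure_preimage_singleton hA (Fin.castLE_injective hrQ)] with γ hγ
  refine le_antisymm (le_min (rank_le_height _) (rank_le_width _)) ?_
  calc min Q U = (((of fun i q => Complex.exp (Complex.I * (γ (i, q) : ℂ)))ᵀ * A).submatrix
        (Fin.castLE hrQ) (Fin.castLE hrU)).rank :=
        ((rank_of_isUnit _ ((isUnit_iff_isUnit_det _).2 (isUnit_iff_ne_zero.2 hγ))).trans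
          (Fintype.card_fin _)).symm
    _ ≤ _ := rank_submatrix_le _ _ _
end
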